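/- Let ψ : (G, u) → (H, v) be a unital ℓ-homomorphism between unital abelian ℓ-groups. For every maximal ℓ-ideal m of H, the preimage ψ⁻¹(m) = {g ∈ G | ψ(g) ∈ m} is a maximal ℓ-ideal of G. -/

import Mathlib

/-! Pulling back along ψ preserves ℓ-ideals and properness (a proper ℓ-ideal misses the
unit). For maximality, an element `h ≥ 0` outside the maximal ℓ-ideal `m` generates together
with `m` all of `H`, so `(v - n • h)⁺ ∈ m` for some `n`. If a proper ℓ-ideal `K` contained
`ψ⁻¹(m)` and some `g ∉ ψ⁻¹(m)`, then with `h = ψ |g|` the element `(u - n • |g|)⁺` lies in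
`ψ⁻¹(m) ⊆ K`, and `u ≤ (u - n • |g|)⁺ + n • |g| ∈ K` would force the unit into `K`. -/

/-- An ℓ-ideal of an abelian ℓ-group is an additive subgroup that is
order-convex with respect to absolute values. -/
def IsLIdeal {G : Type*} [Lattice G] [AddCommGroup G] (J : AddSubgroup G) : Prop :=
  ∀ a b : G, |a| ≤ |b| → b ∈ J → a ∈ J

/-- A maximal ℓ-ideal is a proper ℓ-ideal not strictly contained in any
proper ℓ-ideal. -/
def IsMaximalLIdeal {G : Type*} [Lattice G] [AddCommGroup G] (J : AddSubgroup G) : Prop :=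
  IsLIdeal J ∧ J ≠ ⊤ ∧ ∀ K : AddSubgroup G, IsLIdeal K → K ≠ ⊤ → J ≤ K → J = K

section LIdeal

variable {G : Type*} [Lattice G] [AddCommGroup G] [CovariantClass G G (· + ·) (· ≤ ·)]
  {J : AddSubgroup G}

lemma IsLIdeal.abs_mem_iff (hJ : IsLIdeal J) {a : G} : |a| ∈ J ↔ a ∈ J :=
  ⟨hJ a |a| (abs_abs a).ge, hJ |a| a (abs_abs a).le⟩

lemma IsLIdeal.mem_of_nonneg_of_le (hJ : IsLIdeal J) {a b : G} (ha : 0 ≤ a) (hab : a ≤ b)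
    (hb : b ∈ J) : a ∈ J :=
  hJ a b (by rwa [abs_of_nonneg ha, abs_of_nonneg (ha.trans hab)]) hb

lemma IsLIdeal.eq_top_of_unit_mem (hJ : IsLIdeal J) {u : G} (hu0 : 0 ≤ u)
    (hu : ∀ g : G, ∃ n : ℕ, |g| ≤ n • u) (huJ : u ∈ J) : J = ⊤ := by
  refine (AddSubgroup.eq_top_iff' J).2 fun g => ?_
  obtain ⟨n, hn⟩ := hu g
  exact hJ g (n • u) (by rwa [abs_of_nonneg (nsmul_nonneg hu0 n)]) (J.nsmul_mem huJ n)

variable (J) in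
/-- For `h ≥ 0`, the ℓ-ideal generated by `J` and `h`. -/
def lIdealAdjoin (h : G) : AddSubgroup G where
  carrier := {a | ∃ n : ℕ, ∃ j ∈ J, 0 ≤ j ∧ |a| ≤ j + n • h}
  zero_mem' := ⟨0, 0, J.zero_mem, le_rfl, by simp⟩
  add_mem' := by
    rintro a b ⟨n, j, hj, hj0, ha⟩ ⟨n', j', hj', hj0', hb⟩
    refine ⟨n + n', j + j', J.add_mem hj hj', add_nonneg hj0 hj0', ?_⟩
    calc |a + b| ≤ |a| + |b| := abs_add_le a b
      _ ≤ (j + n • h) + (j' + n' • h) := add_le_add ha hb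
      _ = (j + j') + (n + n') • h := by rw [add_nsmul]; abel
  neg_mem' := by
    rintro a ⟨n, j, hj, hj0, ha⟩
    exact ⟨n, j, hj, hj0, by rwa [abs_neg]⟩

lemma isLIdeal_lIdealAdjoin (h : G) : IsLIdeal (lIdealAdjoin J h) := by
  rintro a b hab ⟨n, j, hj, hj0, hb⟩
  exact ⟨n, j, hj, hj0, hab.trans hb⟩

lemma IsLIdeal.le_lIdealAdjoin (hJ : IsLIdeal J) (h : G) : J ≤ lIdealAdjoin J h :=
  fun a ha => ⟨0, |a|, hJ.abs_mem_iff.2 ha, abs_nonneg a, by simp⟩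

lemma mem_lIdealAdjoin_self {h : G} (h0 : 0 ≤ h) : h ∈ lIdealAdjoin J h :=
  ⟨1, 0, J.zero_mem, le_rfl, by simp [abs_of_nonneg h0]⟩

lemma IsMaximalLIdeal.exists_posPart_sub_nsmul_mem (hJ : IsMaximalLIdeal J) (v : G) {h : G}
    (h0 : 0 ≤ h) (hhJ : h ∉ J) : ∃ n : ℕ, (v - n • h)⁺ ∈ J := by
  have hadj : lIdealAdjoin J h = ⊤ := by
    by_contra hne
    have := hJ.2.2 _ (isLIdeal_lIdealAdjoin h) hne (hJ.1.le_lIdealAdjoin h)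
    exact hhJ (this ▸ mem_lIdealAdjoin_self h0)
  obtain ⟨n, j, hj, hj0, hv⟩ : v ∈ lIdealAdjoin J h := hadj ▸ AddSubgroup.mem_top v
  have hle : v - n • h ≤ j := sub_le_iff_le_add.2 ((le_abs_self v).trans hv)
  exact ⟨n, hJ.1.mem_of_nonneg_of_le (posPart_nonneg _) (sup_le hle hj0) hj⟩

end LIdeal

section Comap

variable {G H : Type*} [Lattice G] [AddCommGroup G] [Lattice H] [AddCommGroup H]
  (ψ : G →+ H) (hsup : ∀ x y : G, ψ (x ⊔ y) = ψ x ⊔ ψ y)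
include hsup

lemma AddMonoidHom.monotone_of_map_sup : Monotone ψ := fun x y hxy =>
  calc ψ x ≤ ψ x ⊔ ψ y := le_sup_left
    _ = ψ y := by rw [← hsup, sup_eq_right.2 hxy]

lemma AddMonoidHom.map_abs_of_map_sup (x : G) : ψ |x| = |ψ x| := by
  rw [abs, abs, hsup, map_neg]

lemma AddMonoidHom.map_posPart_of_map_sup (x : G) : ψ x⁺ = (ψ x)⁺ := by
  rw [posPart_def, posPart_def, hsup, map_zero]

lemma IsLIdeal.comap {m : AddSubgroup H} (hm : IsLIdeal m) : IsLIdeal (m.comap ψ) :=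
  fun a b hab hb => hm (ψ a) (ψ b)
    (by simpa only [ψ.map_abs_of_map_sup hsup] using ψ.monotone_of_map_sup hsup hab) hb

end Comap

theorem stmt12_general {G H : Type*}
    [Lattice G] [AddCommGroup G] [CovariantClass G G (· + ·) (· ≤ ·)]
    [Lattice H] [AddCommGroup H] [CovariantClass H H (· + ·) (· ≤ ·)]
    (u : G) (hu0 : 0 ≤ u) (hu : ∀ g : G, ∃ n : ℕ, |g| ≤ n • u)
    (v : H) (hv0 : 0 ≤ v) (hv : ∀ h : H, ∃ n : ℕ, |h| ≤ n • v)
    (ψ : G →+ H)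
    (hsup : ∀ x y : G, ψ (x ⊔ y) = ψ x ⊔ ψ y)
    (hψu : ψ u = v)
    (m : AddSubgroup H) (hm : IsMaximalLIdeal m) :
    IsMaximalLIdeal (m.comap ψ) := by
  refine ⟨hm.1.comap ψ hsup, fun htop => ?_, fun K hK hKtop hle => le_antisymm hle fun g hgK => ?_⟩
  · have hvm : v ∈ m := hψu ▸ (htop ▸ AddSubgroup.mem_top u : u ∈ m.comap ψ)
    exact hm.2.1 (hm.1.eq_top_of_unit_mem hv0 hv hvm)
  · by_contra hgm
    have hψg : ψ |g| ∉ m := by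
      rwa [ψ.map_abs_of_map_sup hsup, hm.1.abs_mem_iff]
    obtain ⟨n, hn⟩ := hm.exists_posPart_sub_nsmul_mem v (abs_nonneg (ψ g))
      (by rwa [← ψ.map_abs_of_map_sup hsup])
    have hpre : (u - n • |g|)⁺ ∈ m.comap ψ := by
      rwa [AddSubgroup.mem_comap, ψ.map_posPart_of_map_sup hsup, map_sub, map_nsmul, hψu,
        ψ.map_abs_of_map_sup hsup]
    have huK : u ∈ K := hK.mem_of_nonneg_of_le hu0 (sub_le_iff_le_add.1 (le_posPart _))
      (K.add_mem (hle hpre) (K.nsmul_mem (hK.abs_mem_iff.2 hgK) n))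
    exact hKtop (hK.eq_top_of_unit_mem hu0 hu huK)

/-- The preimage of a maximal ℓ-ideal under a unital ℓ-homomorphism between
unital abelian ℓ-groups is a maximal ℓ-ideal. -/
theorem stmt12 {G H : Type*}
    [Lattice G] [AddCommGroup G] [CovariantClass G G (· + ·) (· ≤ ·)]
    [Lattice H] [AddCommGroup H] [CovariantClass H H (· + ·) (· ≤ ·)]
    (u : G) (hu0 : 0 ≤ u) (hu : ∀ g : G, ∃ n : ℕ, |g| ≤ n • u)
    (v : H) (hv0 : 0 ≤ v) (hv : ∀ h : H, ∃ n : ℕ, |h| ≤ n • v)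
    (ψ : G →+ H)
    (hsup : ∀ x y : G, ψ (x ⊔ y) = ψ x ⊔ ψ y)
    (hinf : ∀ x y : G, ψ (x ⊓ y) = ψ x ⊓ ψ y)
    (hψu : ψ u = v)
    (m : AddSubgroup H) (hm : IsMaximalLIdeal m) :
    IsMaximalLIdeal (m.comap ψ) :=
  stmt12_general u hu0 hu v hv0 hv ψ hsup hψu m hm
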